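/- arXiv:2107.12785 — 2 statements merged into one kernel-verified Lean document; each statement's English description precedes it below -/
import Mathlib

section
/- Let all model parameters be positive, set φ_u = η_u+σ_u+μ, φ_n = η_n+σ_n+μ+δ_n, and define the complex function H(λ) = (1−p)·γ·β1/((λ+φ_u)·(λ+γ+μ)) + p·γ·ν·β1/((λ+φ_n)·(λ+γ+μ)) + (1−p)·γ·α_u·β2·(Π/μ)/((λ+μ_c)·(λ+φ_u)·(λ+γ+μ)) + p·γ·α_n·β2·(Π/μ)/((λ+μ_c)·(λ+φ_n)·(λ+γ+μ)). If the basic reproduction number ℛ₀ = H(0) satisfies ℛ₀ < 1, then every complex λ with Re(λ) ≥ 0 satisfies H(λ) ≠ 1; equivalently, every solution λ ∈ ℂ of H(λ) = 1 has Re(λ) < 0. -/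
/-!
For `Re z ≥ 0` and `a > 0` one has `‖z + a‖ ≥ a`, so each term `c / ∏ (z + aᵢ)` of `H`, with
`c ≥ 0` and all `aᵢ > 0`, has norm at most its value `c / ∏ aᵢ` at `z = 0`. Hence
`‖H z‖ ≤ H 0 = ℛ₀ < 1` on the closed right half-plane, and `H z = 1` is impossible there.
-/

namespace Complex

variable {z : ℂ}

theorem le_norm_add_ofReal {a : ℝ} (hz : 0 ≤ z.re) : a ≤ ‖z + a‖ := by
  have h := re_le_norm (z + a)
  rw [add_re, ofReal_re] at h
  linarith

theorem mul_le_norm_mul_add_ofReal {w : ℂ} {d a : ℝ} (hd : 0 ≤ d) (hw : d ≤ ‖w‖)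
    (hz : 0 ≤ z.re) : d * a ≤ ‖w * (z + a)‖ := by
  rcases le_total a 0 with ha | ha
  · exact (mul_nonpos_of_nonneg_of_nonpos hd ha).trans (norm_nonneg _)
  · rw [norm_mul]
    exact mul_le_mul hw (le_norm_add_ofReal hz) ha (hd.trans hw)

theorem norm_ofReal_div_le {w : ℂ} {c d : ℝ} (hc : 0 ≤ c) (hd : 0 < d) (hw : d ≤ ‖w‖) :
    ‖(c : ℂ) / w‖ ≤ c / d := by
  rw [norm_div, norm_real, Real.norm_of_nonneg hc]
  exact div_le_div_of_nonneg_left hc hd hw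

theorem norm_ofReal_div_mul_add_le {c a b : ℝ} (hc : 0 ≤ c) (ha : 0 < a) (hb : 0 < b)
    (hz : 0 ≤ z.re) : ‖(c : ℂ) / ((z + a) * (z + b))‖ ≤ c / (a * b) :=
  norm_ofReal_div_le hc (by positivity)
    (mul_le_norm_mul_add_ofReal ha.le (le_norm_add_ofReal hz) hz)

theorem norm_ofReal_div_mul_add_mul_add_le {c a b d : ℝ} (hc : 0 ≤ c) (ha : 0 < a)
    (hb : 0 < b) (hd : 0 < d) (hz : 0 ≤ z.re) :
    ‖(c : ℂ) / ((z + a) * (z + b) * (z + d))‖ ≤ c / (a * b * d) :=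
  norm_ofReal_div_le hc (by positivity)
    (mul_le_norm_mul_add_ofReal (by positivity)
      (mul_le_norm_mul_add_ofReal ha.le (le_norm_add_ofReal hz) hz) hz)

end Complex

theorem covid_roots_negative_real_part_general
    (Pi b1 b2 nu mu ga p eu en su sn dn au an mc : ℝ)
    (hPi : 0 < Pi) (hb1 : 0 < b1) (hb2 : 0 < b2) (hnu : 0 < nu)
    (hmu : 0 < mu) (hga : 0 < ga) (hp : 0 < p) (hp1 : p < 1)
    (heu : 0 < eu) (hen : 0 < en) (hsu : 0 < su) (hsn : 0 < sn)
    (hdn : 0 < dn) (hau : 0 < au) (han : 0 < an) (hmc : 0 < mc)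
    (phiu phin : ℝ)
    (hphiu : phiu = eu + su + mu) (hphin : phin = en + sn + mu + dn)
    (H : ℂ → ℂ)
    (hH : ∀ lam : ℂ, H lam =
      ((((1 - p) * ga * b1 : ℝ) : ℂ) / ((lam + (phiu : ℂ)) * (lam + ((ga + mu : ℝ) : ℂ))))
      + (((p * ga * nu * b1 : ℝ) : ℂ) / ((lam + (phin : ℂ)) * (lam + ((ga + mu : ℝ) : ℂ))))
      + ((((1 - p) * ga * au * b2 * (Pi / mu) : ℝ) : ℂ) /
          ((lam + (mc : ℂ)) * (lam + (phiu : ℂ)) * (lam + ((ga + mu : ℝ) : ℂ))))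
      + (((p * ga * an * b2 * (Pi / mu) : ℝ) : ℂ) /
          ((lam + (mc : ℂ)) * (lam + (phin : ℂ)) * (lam + ((ga + mu : ℝ) : ℂ)))))
    (R0 : ℝ)
    (hR0 : (R0 : ℂ) = H 0)
    (hR0lt : R0 < 1) :
    (∀ lam : ℂ, 0 ≤ lam.re → H lam ≠ 1) ∧ (∀ lam : ℂ, H lam = 1 → lam.re < 0) := by
  have hφu : 0 < phiu := by rw [hphiu]; positivity
  have hφn : 0 < phin := by rw [hphin]; positivity
  have hq : 0 ≤ 1 - p := by linarith
  have hR0_eq : R0 = (1 - p) * ga * b1 / (phiu * (ga + mu))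
      + p * ga * nu * b1 / (phin * (ga + mu))
      + (1 - p) * ga * au * b2 * (Pi / mu) / (mc * phiu * (ga + mu))
      + p * ga * an * b2 * (Pi / mu) / (mc * phin * (ga + mu)) := by
    apply Complex.ofReal_injective
    rw [hR0, hH 0]
    push_cast
    ring
  have h_norm_le : ∀ lam : ℂ, 0 ≤ lam.re → ‖H lam‖ ≤ R0 := fun lam hre => by
    rw [hH lam, hR0_eq]
    refine norm_add₄_le.trans (add_le_add (add_le_add (add_le_add ?_ ?_) ?_) ?_)
    · exact Complex.norm_ofReal_div_mul_add_le (by positivity) hφu (by positivity) hre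
    · exact Complex.norm_ofReal_div_mul_add_le (by positivity) hφn (by positivity) hre
    · exact Complex.norm_ofReal_div_mul_add_mul_add_le (by positivity) hmc hφu (by positivity) hre
    · exact Complex.norm_ofReal_div_mul_add_mul_add_le (by positivity) hmc hφn (by positivity) hre
  have h_ne : ∀ lam : ℂ, 0 ≤ lam.re → H lam ≠ 1 := fun lam hre h1 => by
    have := h_norm_le lam hre
    rw [h1, norm_one] at this
    linarith
  exact ⟨h_ne, fun lam h1 => not_le.mp fun hre => h_ne lam hre h1⟩

/-- if `ℛ₀ = H(0) < 1`, then no complex `λ` with `Re λ ≥ 0`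
solves the reduced characteristic equation `H(λ) = 1`; equivalently every
solution of `H(λ) = 1` has negative real part. -/
theorem covid_roots_negative_real_part
    (Pi b1 b2 nu th mu ga p eu en su sn sh dn dh au an mc : ℝ)
    (hPi : 0 < Pi) (hb1 : 0 < b1) (hb2 : 0 < b2) (hnu : 0 < nu) (hnu1 : nu < 1)
    (hth : 0 < th) (hmu : 0 < mu) (hga : 0 < ga) (hp : 0 < p) (hp1 : p < 1)
    (heu : 0 < eu) (hen : 0 < en) (hsu : 0 < su) (hsn : 0 < sn) (hsh : 0 < sh)
    (hdn : 0 < dn) (hdh : 0 < dh) (hau : 0 < au) (han : 0 < an) (hmc : 0 < mc)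
    (phiu phin : ℝ)
    (hphiu : phiu = eu + su + mu) (hphin : phin = en + sn + mu + dn)
    (H : ℂ → ℂ)
    (hH : ∀ lam : ℂ, H lam =
      ((((1 - p) * ga * b1 : ℝ) : ℂ) / ((lam + (phiu : ℂ)) * (lam + ((ga + mu : ℝ) : ℂ))))
      + (((p * ga * nu * b1 : ℝ) : ℂ) / ((lam + (phin : ℂ)) * (lam + ((ga + mu : ℝ) : ℂ))))
      + ((((1 - p) * ga * au * b2 * (Pi / mu) : ℝ) : ℂ) /
          ((lam + (mc : ℂ)) * (lam + (phiu : ℂ)) * (lam + ((ga + mu : ℝ) : ℂ))))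
      + (((p * ga * an * b2 * (Pi / mu) : ℝ) : ℂ) /
          ((lam + (mc : ℂ)) * (lam + (phin : ℂ)) * (lam + ((ga + mu : ℝ) : ℂ)))))
    (R0 : ℝ)
    (hR0 : (R0 : ℂ) = H 0)
    (hR0lt : R0 < 1) :
    (∀ lam : ℂ, 0 ≤ lam.re → H lam ≠ 1) ∧ (∀ lam : ℂ, H lam = 1 → lam.re < 0) :=
  covid_roots_negative_real_part_general Pi b1 b2 nu mu ga p eu en su sn dn au an mc hPi hb1 hb2 hnu
    hmu hga hp hp1 heu hen hsu hsn hdn hau han hmc phiu phin hphiu hphin H hH R0 hR0 hR0lt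
end

section
/- Let all model parameters be positive and set φ_u = η_u+σ_u+μ, φ_n = η_n+σ_n+μ+δ_n, φ_h = σ_h+μ+δ_h. Let J be the 7×7 real Jacobian of the COVID-19 model at the disease-free equilibrium, with rows (ordering S, E, I_u, I_n, I_h, R, V): (−μ, 0, −β1, −ν·β1, 0, θ, −Π·β2/μ), (0, −(γ+μ), β1, ν·β1, 0, 0, Π·β2/μ), (0, (1−p)·γ, −φ_u, 0, 0, 0, 0), (0, p·γ, 0, −φ_n, 0, 0, 0), (0, 0, η_u, η_n, −φ_h, 0, 0), (0, 0, σ_u, σ_n, σ_h, −(θ+μ), 0), (0, 0, α_u, α_n, 0, 0, −μ_c). If ℛ₀ < 1, then every complex eigenvalue of J has strictly negative real part; if ℛ₀ > 1, then J has a real eigenvalue λ* > 0. Here ℛ₀ = (1−p)·γ·β1/(φ_u·(γ+μ)) + p·γ·ν·β1/(φ_n·(γ+μ)) + (1−p)·γ·α_u·β2·(Π/μ)/(μ_c·φ_u·(γ+μ)) + p·γ·α_n·β2·(Π/μ)/(μ_c·φ_n·(γ+μ)). -/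
/-!
Expanding `det (λ - J)` splits off the factors `λ + μ`, `λ + θ + μ`, `λ + φ_h` of the `S`, `R`,
`I_h` compartments; the determinant of the remaining `4 × 4` block, divided by
`(λ + φ_u)(λ + φ_n)(λ + μ_c)`, vanishes exactly when `G λ = λ + γ + μ`, where `G` (`dfeGain`) is a
nonnegative combination of products of the resolvents `(λ + φ_u)⁻¹`, `(λ + φ_n)⁻¹`, `(λ + μ_c)⁻¹`,
and `G 0 = (γ + μ) ℛ₀`. On the closed right half-plane `‖(λ + d)⁻¹‖ ≤ d⁻¹`, so `‖G λ‖ ≤ G 0`,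
whereas `‖λ + γ + μ‖ ≥ γ + μ`: for `ℛ₀ < 1` the equation has no root there. For `ℛ₀ > 1`,
`x ↦ G x - (x + γ + μ)` is positive at `0` and nonpositive at `G 0 - (γ + μ)`, so the intermediate
value theorem gives a positive root.
-/

open Matrix RCLike

section HalfPlane

variable {𝕜 : Type*} [RCLike 𝕜]

def HalfPlaneDominated (f : 𝕜 → 𝕜) (r : ℝ) : Prop :=
  f 0 = r ∧ ∀ z : 𝕜, 0 ≤ re z → ‖f z‖ ≤ r

theorem le_norm_add_ofReal {z : 𝕜} (hz : 0 ≤ re z) (d : ℝ) : d ≤ ‖z + d‖ :=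
  calc d ≤ re (z + d) := by simpa using hz
    _ ≤ ‖z + d‖ := re_le_norm _

theorem add_ofReal_ne_zero {z : 𝕜} (hz : 0 ≤ re z) {d : ℝ} (hd : 0 < d) : z + d ≠ 0 :=
  norm_pos_iff.mp (hd.trans_le (le_norm_add_ofReal hz d))

namespace HalfPlaneDominated

variable {f g : 𝕜 → 𝕜} {r s : ℝ}

theorem nonneg (hf : HalfPlaneDominated f r) : 0 ≤ r :=
  (norm_nonneg _).trans (hf.2 0 (by simp))

theorem const {c : ℝ} (hc : 0 ≤ c) : HalfPlaneDominated (fun _ : 𝕜 => (c : 𝕜)) c :=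
  ⟨rfl, fun _ _ => by rw [norm_ofReal, abs_of_nonneg hc]⟩

theorem inv_add_ofReal {d : ℝ} (hd : 0 < d) :
    HalfPlaneDominated (fun z : 𝕜 => (z + d)⁻¹) d⁻¹ :=
  ⟨by simp, fun z hz => by rw [norm_inv]; exact inv_anti₀ hd (le_norm_add_ofReal hz d)⟩

theorem add (hf : HalfPlaneDominated f r) (hg : HalfPlaneDominated g s) :
    HalfPlaneDominated (fun z => f z + g z) (r + s) :=
  ⟨by simp [hf.1, hg.1], fun z hz =>
    (norm_add_le _ _).trans (add_le_add (hf.2 z hz) (hg.2 z hz))⟩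

theorem mul (hf : HalfPlaneDominated f r) (hg : HalfPlaneDominated g s) :
    HalfPlaneDominated (fun z => f z * g z) (r * s) :=
  ⟨by simp [hf.1, hg.1], fun z hz => by
    rw [norm_mul]; exact mul_le_mul (hf.2 z hz) (hg.2 z hz) (norm_nonneg _) hf.nonneg⟩

theorem apply_ne_add (hf : HalfPlaneDominated f r) {a : ℝ} (hra : r < a) {z : 𝕜}
    (hz : 0 ≤ re z) : f z ≠ z + a := by
  intro h
  have := le_norm_add_ofReal hz a
  rw [← h] at this
  linarith [hf.2 z hz]

theorem exists_pos_apply_eq_add {f : ℝ → ℝ} (hf : HalfPlaneDominated f r) {a : ℝ} (har : a < r)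
    (hcont : ContinuousOn f (Set.Ici 0)) : ∃ x, 0 < x ∧ f x = x + a := by
  have hle : ∀ x, 0 ≤ x → f x ≤ r := fun x hx =>
    (le_abs_self _).trans (by simpa using hf.2 x (by simpa using hx))
  have hf0 : f 0 = r := hf.1
  have hcont' : ContinuousOn (fun x => f x - (x + a)) (Set.Icc 0 (r - a)) :=
    (hcont.mono Set.Icc_subset_Ici_self).sub (by fun_prop)
  obtain ⟨x, hx, hfx⟩ := intermediate_value_Icc' (by linarith) hcont'
    (show (0 : ℝ) ∈ Set.Icc _ _ from
      ⟨by linarith [hle (r - a) (by linarith)], by rw [hf0]; linarith⟩)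
  refine ⟨x, hx.1.lt_of_ne ?_, by linarith⟩
  rintro rfl
  simp only [hf0] at hfx
  linarith

end HalfPlaneDominated

end HalfPlane

section Model

variable {𝕜 : Type*} [RCLike 𝕜]

/-- Laplace transform of the rate at which the outflow of `E` regenerates `E`: through `I_u`
(entered at rate `cu`, left at rate `u`) and `I_n` (`cn`, `n`), each infecting directly (`bu`, `bn`)
or by shedding into `V` (`ku`, `kn`), which decays at rate `c`. -/
noncomputable def dfeGain (cu bu ku cn bn kn u n c : ℝ) (z : 𝕜) : 𝕜 :=
  cu * (z + u)⁻¹ * (bu + ku * (z + c)⁻¹) + cn * (z + n)⁻¹ * (bn + kn * (z + c)⁻¹)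

variable {cu bu ku cn bn kn u n c : ℝ}

theorem halfPlaneDominated_dfeGain (hcu : 0 ≤ cu) (hbu : 0 ≤ bu) (hku : 0 ≤ ku)
    (hcn : 0 ≤ cn) (hbn : 0 ≤ bn) (hkn : 0 ≤ kn) (hu : 0 < u) (hn : 0 < n) (hc : 0 < c) :
    HalfPlaneDominated (dfeGain (𝕜 := 𝕜) cu bu ku cn bn kn u n c)
      (cu * u⁻¹ * (bu + ku * c⁻¹) + cn * n⁻¹ * (bn + kn * c⁻¹)) :=
  open HalfPlaneDominated in
  (((const hcu).mul (inv_add_ofReal hu)).mul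
      ((const hbu).add ((const hku).mul (inv_add_ofReal hc)))).add
    (((const hcn).mul (inv_add_ofReal hn)).mul
      ((const hbn).add ((const hkn).mul (inv_add_ofReal hc))))

theorem continuousOn_dfeGain (hu : 0 < u) (hn : 0 < n) (hc : 0 < c) :
    ContinuousOn (dfeGain (𝕜 := 𝕜) cu bu ku cn bn kn u n c) {z | 0 ≤ re z} := by
  have hinv {d : ℝ} (hd : 0 < d) : ContinuousOn (fun z : 𝕜 => (z + d)⁻¹) {z | 0 ≤ re z} :=
    (continuousOn_id.add continuousOn_const).inv₀ fun z hz => add_ofReal_ne_zero hz hd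
  have := hinv hu; have := hinv hn; have := hinv hc
  unfold dfeGain
  fun_prop

end Model

section Jacobian

variable {K : Type*} [Field K] (Pi b1 b2 nu th mu ga p eu en su sn sh au an mc phiu phin phih : K)

def dfeJacobian : Matrix (Fin 7) (Fin 7) K :=
  !![-mu, 0, -b1, -nu * b1, 0, th, -Pi * b2 / mu;
     0, -(ga + mu), b1, nu * b1, 0, 0, Pi * b2 / mu;
     0, (1 - p) * ga, -phiu, 0, 0, 0, 0;
     0, p * ga, 0, -phin, 0, 0, 0;
     0, 0, eu, en, -phih, 0, 0;
     0, 0, su, sn, sh, -(th + mu), 0;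
     0, 0, au, an, 0, 0, -mc]

theorem dfeJacobian_map {L : Type*} [Field L] (f : K →+* L) :
    (dfeJacobian Pi b1 b2 nu th mu ga p eu en su sn sh au an mc phiu phin phih).map f =
      dfeJacobian (f Pi) (f b1) (f b2) (f nu) (f th) (f mu) (f ga) (f p) (f eu) (f en) (f su)
        (f sn) (f sh) (f au) (f an) (f mc) (f phiu) (f phin) (f phih) := by
  ext i j
  fin_cases i <;> fin_cases j <;> simp [dfeJacobian]

theorem det_smul_one_sub_dfeJacobian (z : K) :
    (z • (1 : Matrix (Fin 7) (Fin 7) K) -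
        dfeJacobian Pi b1 b2 nu th mu ga p eu en su sn sh au an mc phiu phin phih).det =
      (z + mu) * (z + (th + mu)) * (z + phih) *
        ((z + (ga + mu)) * (z + phiu) * (z + phin) * (z + mc)
          - (1 - p) * ga * (b1 * (z + mc) + au * (Pi * b2 / mu)) * (z + phin)
          - p * ga * (nu * b1 * (z + mc) + an * (Pi * b2 / mu)) * (z + phiu)) := by
  simp [dfeJacobian, det_succ_row_zero, Fin.sum_univ_succ, Fin.succAbove, one_apply]
  ring

end Jacobian

section CharacteristicEquation

variable {𝕜 : Type*} [RCLike 𝕜]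
  {Pi b1 b2 nu th mu ga p eu en su sn sh au an mc phiu phin phih : ℝ}

theorem det_smul_one_sub_dfeJacobian_map {z : 𝕜} (hu : z + phiu ≠ 0) (hn : z + phin ≠ 0)
    (hc : z + mc ≠ 0) :
    (z • (1 : Matrix (Fin 7) (Fin 7) 𝕜) - (dfeJacobian Pi b1 b2 nu th mu ga p eu en su sn sh
        au an mc phiu phin phih).map ((↑) : ℝ → 𝕜)).det =
      (z + mu) * (z + (th + mu : ℝ)) * (z + phih) * ((z + phiu) * (z + phin) * (z + mc)) *
        (z + (ga + mu : ℝ) - dfeGain ((1 - p) * ga) b1 (au * (Pi * b2 / mu)) (p * ga) (nu * b1)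
          (an * (Pi * b2 / mu)) phiu phin mc z) := by
  change (z • 1 - (dfeJacobian _ _ _ _ _ _ _ _ _ _ _ _ _ _ _ _ _ _ _).map
    (algebraMap ℝ 𝕜)).det = _
  rw [dfeJacobian_map, det_smul_one_sub_dfeJacobian]
  simp only [algebraMap_eq_ofReal, dfeGain]
  push_cast
  field_simp
  ring

theorem det_smul_one_sub_dfeJacobian_map_eq_zero_iff (hmu : 0 < mu) (hthmu : 0 < th + mu)
    (hphiu : 0 < phiu) (hphin : 0 < phin) (hphih : 0 < phih) (hmc : 0 < mc)
    {z : 𝕜} (hz : 0 ≤ re z) :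
    (z • (1 : Matrix (Fin 7) (Fin 7) 𝕜) - (dfeJacobian Pi b1 b2 nu th mu ga p eu en su sn sh
        au an mc phiu phin phih).map ((↑) : ℝ → 𝕜)).det = 0 ↔
      dfeGain ((1 - p) * ga) b1 (au * (Pi * b2 / mu)) (p * ga) (nu * b1) (an * (Pi * b2 / mu))
        phiu phin mc z = z + (ga + mu : ℝ) := by
  have hne {d : ℝ} (hd : 0 < d) : z + d ≠ 0 := add_ofReal_ne_zero hz hd
  have hP :
      (z + mu) * (z + (th + mu : ℝ)) * (z + phih) * ((z + phiu) * (z + phin) * (z + mc)) ≠ 0 :=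
    mul_ne_zero (mul_ne_zero (mul_ne_zero (hne hmu) (hne hthmu)) (hne hphih))
      (mul_ne_zero (mul_ne_zero (hne hphiu) (hne hphin)) (hne hmc))
  rw [det_smul_one_sub_dfeJacobian_map (hne hphiu) (hne hphin) (hne hmc), mul_eq_zero,
    or_iff_right hP, sub_eq_zero, eq_comm]

end CharacteristicEquation

theorem covid_DFE_spectral_stability_general
    (Pi b1 b2 nu th mu ga p eu en su sn sh dn dh au an mc : ℝ)
    (hPi : 0 < Pi) (hb1 : 0 < b1) (hb2 : 0 < b2) (hnu : 0 < nu)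
    (hth : 0 < th) (hmu : 0 < mu) (hga : 0 < ga) (hp : 0 < p) (hp1 : p < 1)
    (heu : 0 < eu) (hen : 0 < en) (hsu : 0 < su) (hsn : 0 < sn) (hsh : 0 < sh)
    (hdn : 0 < dn) (hdh : 0 < dh) (hau : 0 < au) (han : 0 < an) (hmc : 0 < mc)
    (phiu phin phih : ℝ)
    (hphiu : phiu = eu + su + mu) (hphin : phin = en + sn + mu + dn)
    (hphih : phih = sh + mu + dh)
    (J : Matrix (Fin 7) (Fin 7) ℝ)
    (hJ : J = !![-mu, 0, -b1, -nu * b1, 0, th, -Pi * b2 / mu;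
                 0, -(ga + mu), b1, nu * b1, 0, 0, Pi * b2 / mu;
                 0, (1 - p) * ga, -phiu, 0, 0, 0, 0;
                 0, p * ga, 0, -phin, 0, 0, 0;
                 0, 0, eu, en, -phih, 0, 0;
                 0, 0, su, sn, sh, -(th + mu), 0;
                 0, 0, au, an, 0, 0, -mc])
    (R0 : ℝ)
    (hR0 : R0 = (1 - p) * ga * b1 / (phiu * (ga + mu))
      + p * ga * nu * b1 / (phin * (ga + mu))
      + (1 - p) * ga * au * b2 * (Pi / mu) / (mc * phiu * (ga + mu))
      + p * ga * an * b2 * (Pi / mu) / (mc * phin * (ga + mu))) :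
    (R0 < 1 → ∀ lam : ℂ,
      (lam • (1 : Matrix (Fin 7) (Fin 7) ℂ) - J.map Complex.ofReal).det = 0 →
        lam.re < 0) ∧
    (R0 > 1 → ∃ lamstar : ℝ, 0 < lamstar ∧
      (lamstar • (1 : Matrix (Fin 7) (Fin 7) ℝ) - J).det = 0) := by
  have hJ' : J = dfeJacobian Pi b1 b2 nu th mu ga p eu en su sn sh au an mc phiu phin phih := hJ
  have hthmu : 0 < th + mu := by positivity
  have hgamu : 0 < ga + mu := by positivity
  have hphiu' : 0 < phiu := hphiu ▸ by positivity
  have hphin' : 0 < phin := hphin ▸ by positivity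
  have hphih' : 0 < phih := hphih ▸ by positivity
  have h1p : 0 ≤ 1 - p := by linarith
  have hr : (1 - p) * ga * phiu⁻¹ * (b1 + au * (Pi * b2 / mu) * mc⁻¹)
      + p * ga * phin⁻¹ * (nu * b1 + an * (Pi * b2 / mu) * mc⁻¹) = (ga + mu) * R0 := by
    rw [hR0]; field_simp; ring
  have hG {𝕜 : Type} [RCLike 𝕜] := hr ▸ halfPlaneDominated_dfeGain (𝕜 := 𝕜)
    (by positivity) hb1.le (by positivity) (by positivity) (by positivity) (by positivity)
    hphiu' hphin' hmc
  refine ⟨fun hR1 z hz => ?_, fun hR1 => ?_⟩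
  · by_contra! hre
    rw [hJ'] at hz
    exact hG.apply_ne_add (mul_lt_of_lt_one_right hgamu hR1) hre
      ((det_smul_one_sub_dfeJacobian_map_eq_zero_iff hmu hthmu hphiu' hphin' hphih' hmc hre).mp hz)
  · obtain ⟨x, hx, hGx⟩ := hG.exists_pos_apply_eq_add (lt_mul_of_one_lt_right hgamu hR1)
      (by simpa [Set.Ici] using continuousOn_dfeGain (𝕜 := ℝ) hphiu' hphin' hmc)
    refine ⟨x, hx, ?_⟩
    rw [hJ']
    exact (det_smul_one_sub_dfeJacobian_map_eq_zero_iff hmu hthmu hphiu' hphin' hphih' hmc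
      (by simpa using hx.le)).mpr hGx

/-- spectral form of the linearized stability of the
disease-free equilibrium: if `ℛ₀ < 1` every complex eigenvalue of the
Jacobian `J` has negative real part; if `ℛ₀ > 1` then `J` has a positive real
eigenvalue. -/
theorem covid_DFE_spectral_stability
    (Pi b1 b2 nu th mu ga p eu en su sn sh dn dh au an mc : ℝ)
    (hPi : 0 < Pi) (hb1 : 0 < b1) (hb2 : 0 < b2) (hnu : 0 < nu) (hnu1 : nu < 1)
    (hth : 0 < th) (hmu : 0 < mu) (hga : 0 < ga) (hp : 0 < p) (hp1 : p < 1)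
    (heu : 0 < eu) (hen : 0 < en) (hsu : 0 < su) (hsn : 0 < sn) (hsh : 0 < sh)
    (hdn : 0 < dn) (hdh : 0 < dh) (hau : 0 < au) (han : 0 < an) (hmc : 0 < mc)
    (phiu phin phih : ℝ)
    (hphiu : phiu = eu + su + mu) (hphin : phin = en + sn + mu + dn)
    (hphih : phih = sh + mu + dh)
    (J : Matrix (Fin 7) (Fin 7) ℝ)
    (hJ : J = !![-mu, 0, -b1, -nu * b1, 0, th, -Pi * b2 / mu;
                 0, -(ga + mu), b1, nu * b1, 0, 0, Pi * b2 / mu;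
                 0, (1 - p) * ga, -phiu, 0, 0, 0, 0;
                 0, p * ga, 0, -phin, 0, 0, 0;
                 0, 0, eu, en, -phih, 0, 0;
                 0, 0, su, sn, sh, -(th + mu), 0;
                 0, 0, au, an, 0, 0, -mc])
    (R0 : ℝ)
    (hR0 : R0 = (1 - p) * ga * b1 / (phiu * (ga + mu))
      + p * ga * nu * b1 / (phin * (ga + mu))
      + (1 - p) * ga * au * b2 * (Pi / mu) / (mc * phiu * (ga + mu))
      + p * ga * an * b2 * (Pi / mu) / (mc * phin * (ga + mu))) :
    (R0 < 1 → ∀ lam : ℂ,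
      (lam • (1 : Matrix (Fin 7) (Fin 7) ℂ) - J.map Complex.ofReal).det = 0 →
        lam.re < 0) ∧
    (R0 > 1 → ∃ lamstar : ℝ, 0 < lamstar ∧
      (lamstar • (1 : Matrix (Fin 7) (Fin 7) ℝ) - J).det = 0) :=
  covid_DFE_spectral_stability_general Pi b1 b2 nu th mu ga p eu en su sn sh dn dh au an mc hPi hb1
    hb2 hnu hth hmu hga hp hp1 heu hen hsu hsn hsh hdn hdh hau han hmc phiu phin phih hphiu hphin
    hphih J hJ R0 hR0
end
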